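/- arXiv:1603.06625 — 5 statements merged into one kernel-verified Lean document; each statement's English description precedes it below -/
import Mathlib

section
/- Let N = 2n and let d_1, ..., d_n be units of Z/N. Then there exist signs s_1, ..., s_n in {1, -1} such that s_1 d_1 + ... + s_n d_n ≡ n (mod 2n). -/
/-!
Put the sign `-1` on a set `T` of indices and `+1` elsewhere; the signed sum is then
`S - 2 ∑_{i ∈ T} dᵢ` with `S = ∑ dᵢ`. The `dᵢ` are odd, so `S - n = 2f` is even, and
`2 ∑_{i ∈ T} dᵢ = 2f` in `ℤ/2n` as soon as `∑_{i ∈ T} dᵢ ≡ f (mod n)`. Such a `T` exists because the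
subset sums of `n` units of `ℤ/n` cover `ℤ/n`: adjoining a unit `u` either enlarges the set of subset
sums, or leaves it stable under `x ↦ x + u`, and then, `u` being a generator, it is all of `ℤ/n`.
-/

open Finset

section SubsetSums

variable {ι G : Type*} [AddCommMonoid G] [DecidableEq G]

def subsetSums (d : ι → G) (s : Finset ι) : Finset G :=
  s.powerset.image fun T => ∑ i ∈ T, d i

lemma mem_subsetSums {d : ι → G} {s : Finset ι} {x : G} :
    x ∈ subsetSums d s ↔ ∃ T ⊆ s, ∑ i ∈ T, d i = x := by
  simp [subsetSums]

lemma zero_mem_subsetSums (d : ι → G) (s : Finset ι) : 0 ∈ subsetSums d s :=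
  mem_subsetSums.2 ⟨∅, empty_subset _, sum_empty⟩

lemma subsetSums_mono (d : ι → G) {s t : Finset ι} (h : s ⊆ t) :
    subsetSums d s ⊆ subsetSums d t :=
  image_subset_image (powerset_mono.2 h)

lemma add_mem_subsetSums_insert [DecidableEq ι] {d : ι → G} {s : Finset ι} {a : ι} (ha : a ∉ s)
    {x : G} (hx : x ∈ subsetSums d s) : x + d a ∈ subsetSums d (insert a s) := by
  obtain ⟨T, hT, rfl⟩ := mem_subsetSums.1 hx
  refine mem_subsetSums.2 ⟨insert a T, insert_subset_insert a hT, ?_⟩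
  rw [sum_insert fun h => ha (hT h), add_comm]

end SubsetSums

namespace ZMod

section

variable {m : ℕ} [NeZero m]

lemma eq_univ_of_add_unit_mem {A : Finset (ZMod m)} {u : ZMod m} (hu : IsUnit u) (h0 : 0 ∈ A)
    (hA : ∀ x ∈ A, x + u ∈ A) : A = univ := by
  have hmul : ∀ k : ℕ, k • u ∈ A := by
    intro k
    induction k with
    | zero => simpa using h0
    | succ k ih => rw [succ_nsmul]; exact hA _ ih
  obtain ⟨v, rfl⟩ := hu
  refine eq_univ_of_forall fun y => ?_
  simpa [mul_assoc] using hmul (y * ↑v⁻¹).val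

lemma min_le_card_subsetSums {ι : Type*} [DecidableEq ι] (d : ι → ZMod m) (s : Finset ι)
    (hd : ∀ i ∈ s, IsUnit (d i)) : min m (#s + 1) ≤ #(subsetSums d s) := by
  induction s using Finset.induction_on with
  | empty => simp [subsetSums]
  | @insert a s ha ih =>
    have ih := ih fun i hi => hd i (mem_insert_of_mem hi)
    have hmono := card_le_card (subsetSums_mono d (subset_insert a s))
    rw [card_insert_of_notMem ha]
    by_cases hstable : ∀ x ∈ subsetSums d s, x + d a ∈ subsetSums d s
    · have huniv := eq_univ_of_add_unit_mem (hd a (mem_insert_self a s))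
        (zero_mem_subsetSums d s) hstable
      rw [huniv, card_univ, ZMod.card] at hmono
      omega
    · push Not at hstable
      obtain ⟨x, hx, hxa⟩ := hstable
      have hgrow : insert (x + d a) (subsetSums d s) ⊆ subsetSums d (insert a s) :=
        insert_subset (add_mem_subsetSums_insert ha hx) (subsetSums_mono d (subset_insert a s))
      have := card_le_card hgrow
      rw [card_insert_of_notMem hxa] at this
      omega

lemma exists_subset_sum_eq {ι : Type*} [DecidableEq ι] (d : ι → ZMod m) (s : Finset ι)
    (hd : ∀ i ∈ s, IsUnit (d i)) (hs : m ≤ #s) (c : ZMod m) : ∃ T ⊆ s, ∑ i ∈ T, d i = c := by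
  have hle : #(subsetSums d s) ≤ m := by simpa [ZMod.card] using card_le_univ (subsetSums d s)
  have hge := min_le_card_subsetSums d s hd
  have huniv : subsetSums d s = univ :=
    eq_univ_of_card _ (by rw [ZMod.card]; omega)
  exact mem_subsetSums.1 (huniv ▸ mem_univ c)

lemma exists_eq_mul_of_castHom_eq_zero {k : ℕ} (h : k ∣ m) {x : ZMod m}
    (hx : castHom h (ZMod k) x = 0) : ∃ y : ZMod m, x = k * y := by
  rw [← natCast_zmod_val x, map_natCast, natCast_eq_zero_iff] at hx
  obtain ⟨c, hc⟩ := hx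
  exact ⟨c, by rw [← natCast_zmod_val x, hc, Nat.cast_mul]⟩

end

section

variable {n : ℕ} [NeZero n]

lemma two_mul_eq_two_mul_of_castHom_eq {x y : ZMod (2 * n)}
    (h : castHom (dvd_mul_left n 2) (ZMod n) x = castHom (dvd_mul_left n 2) (ZMod n) y) :
    2 * x = 2 * y := by
  rw [← sub_eq_zero, ← map_sub] at h
  obtain ⟨z, hz⟩ := exists_eq_mul_of_castHom_eq_zero _ h
  have h2n : (2 * n : ZMod (2 * n)) = 0 := by exact_mod_cast natCast_self (2 * n)
  rw [← sub_eq_zero, ← mul_sub, hz, ← mul_assoc, h2n, zero_mul]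

lemma exists_sum_units_eq_card_add_two_mul {ι : Type*} [Fintype ι] (d : ι → ZMod (2 * n))
    (hd : ∀ i, IsUnit (d i)) : ∃ f : ZMod (2 * n), ∑ i, d i = Fintype.card ι + 2 * f := by
  have hodd : ∀ i, castHom (dvd_mul_right 2 n) (ZMod 2) (d i) = 1 := fun i => by
    have := (hd i).map (castHom (dvd_mul_right 2 n) (ZMod 2))
    generalize castHom (dvd_mul_right 2 n) (ZMod 2) (d i) = v at this ⊢
    revert v; decide
  have heven : castHom (dvd_mul_right 2 n) (ZMod 2) (∑ i, d i - Fintype.card ι) = 0 := by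
    rw [map_sub, map_sum, map_natCast]
    simp [hodd]
  obtain ⟨f, hf⟩ := exists_eq_mul_of_castHom_eq_zero _ heven
  exact ⟨f, by rw [eq_add_of_sub_eq' hf, Nat.cast_ofNat]⟩

end

end ZMod

lemma sum_ite_mem_neg_one_smul {ι R : Type*} [Fintype ι] [DecidableEq ι] [Ring R]
    (d : ι → R) (T : Finset ι) :
    ∑ i, (if i ∈ T then (-1 : ℤ) else 1) • d i = ∑ i, d i - 2 * ∑ i ∈ T, d i := by
  calc ∑ i, (if i ∈ T then (-1 : ℤ) else 1) • d i
      = ∑ i, (d i - if i ∈ T then 2 * d i else 0) :=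
        sum_congr rfl fun i _ => by split_ifs <;> simp [two_mul]
    _ = ∑ i, d i - 2 * ∑ i ∈ T, d i := by rw [sum_sub_distrib, sum_ite_mem, univ_inter, mul_sum]

theorem signed_sum_units (n : ℕ) (hn : 0 < n) (d : Fin n → ZMod (2 * n))
    (hd : ∀ i, IsUnit (d i)) :
    ∃ s : Fin n → ℤ, (∀ i, s i = 1 ∨ s i = -1) ∧
      ∑ i, (s i) • d i = (n : ZMod (2 * n)) := by
  have : NeZero n := ⟨hn.ne'⟩
  let π := ZMod.castHom (dvd_mul_left n 2) (ZMod n)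
  obtain ⟨f, hf⟩ := ZMod.exists_sum_units_eq_card_add_two_mul d hd
  obtain ⟨T, -, hT⟩ := ZMod.exists_subset_sum_eq (fun i => π (d i)) univ
    (fun i _ => (hd i).map π) (by simp) (π f)
  have h2T : 2 * ∑ i ∈ T, d i = 2 * f :=
    ZMod.two_mul_eq_two_mul_of_castHom_eq (by rw [map_sum]; exact hT)
  refine ⟨fun i => if i ∈ T then -1 else 1, fun i => by by_cases h : i ∈ T <;> simp [h], ?_⟩
  rw [sum_ite_mem_neg_one_smul, h2T, hf, Fintype.card_fin, add_sub_cancel_right]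
end

section
/- (Cauchy–Davenport variant) Let N be a positive integer and let A, B be nonempty subsets of Z/N such that 0 ∈ B and every nonzero element b of B satisfies gcd(b, N) = 1. Then |A + B| ≥ min(N, |A| + |B| - 1). -/
/-!
Induct on `|B|` with Dyson's e-transform: if `a + b ∉ A` for some `a ∈ A`, `b ∈ B`, replace
`(A, B)` by `(A ∪ (a + B), B ∩ (-a + A))`, which keeps `|A| + |B|`, `0 ∈ B` and `A ≠ ∅`, shrinks
`B` and does not enlarge `A + B`. Otherwise `A + B = A` is invariant under every `b ∈ B`, so
`|A|` is at least the order of any nonzero `b ∈ B`, and a unit of `ZMod N` has order `N`.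
-/

open scoped Pointwise

open Finset

lemma Finset.addOrderOf_le_card_of_add_mem {G : Type*} [AddGroup G] {A : Finset G}
    (hA : A.Nonempty) {b : G} (hb : ∀ a ∈ A, a + b ∈ A) : addOrderOf b ≤ #A := by
  obtain ⟨a, ha⟩ := hA
  have hmem : ∀ k : ℕ, a + k • b ∈ A := by
    intro k
    induction k with
    | zero => simpa using ha
    | succ k ih => simpa [succ_nsmul, ← add_assoc] using hb _ ih
  exact le_card_of_inj_on_range (a + · • b) (fun k _ => hmem k)
    fun i hi j hj hij => nsmul_injOn_Iio_addOrderOf hi hj (add_left_cancel hij)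

theorem Finset.min_le_card_add_of_le_addOrderOf {G : Type*} [AddCommGroup G] [DecidableEq G]
    {m : ℕ} {A B : Finset G} (hA : A.Nonempty) (hB : 0 ∈ B)
    (hm : ∀ b ∈ B, b ≠ 0 → m ≤ addOrderOf b) : min m (#A + #B - 1) ≤ #(A + B) := by
  induction B using Finset.strongInduction generalizing A with
  | H B ih =>
    by_cases hclosed : ∀ a ∈ A, ∀ b ∈ B, a + b ∈ A
    · have hAB : A + B = A := subset_antisymm (add_subset_iff.2 hclosed) (subset_add_left A hB)
      rw [hAB]
      obtain hB0 | hBnt := B.eq_singleton_or_nontrivial hB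
      · simp [hB0]
      · obtain ⟨b, hb, hb0⟩ := hBnt.exists_ne 0
        exact min_le_of_left_le <| (hm b hb hb0).trans <|
          addOrderOf_le_card_of_add_mem hA fun a ha => hclosed a ha b hb
    · push Not at hclosed
      obtain ⟨a, ha, b, hb, hab⟩ := hclosed
      have hsub : (addDysonETransform a (A, B)).2 ⊂ B := by
        refine ssubset_iff_of_subset inter_subset_left |>.2 ⟨b, hb, ?_⟩
        simp only [mem_inter, mem_vadd_finset, not_and, not_exists]
        rintro - c hc rfl
        exact hab (by simpa using hc)
      have hrec := ih _ hsub (A := (addDysonETransform a (A, B)).1) (hA.mono subset_union_left) ?_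
        fun c hc => hm c (hsub.subset hc)
      · rw [addDysonETransform.card] at hrec
        exact hrec.trans (card_le_card (addDysonETransform.subset a (A, B)))
      · simpa [mem_vadd_finset] using ⟨hB, a, ha, neg_add_cancel a⟩

lemma ZMod.addOrderOf_of_isUnit {N : ℕ} {u : ZMod N} (hu : IsUnit u) : addOrderOf u = N := by
  refine (addOrderOf_eq_addOrderOf_iff.2 fun n => ?_).trans (ZMod.addOrderOf_one N)
  simp [nsmul_eq_mul, hu.mul_left_eq_zero]

theorem cauchy_davenport_variant_general (N : ℕ) (A B : Finset (ZMod N))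
    (hA : A.Nonempty) (hB : (0 : ZMod N) ∈ B)
    (hunit : ∀ b ∈ B, b ≠ 0 → IsUnit b) :
    min N (A.card + B.card - 1) ≤ (A + B).card :=
  min_le_card_add_of_le_addOrderOf hA hB fun b hb hb0 =>
    (ZMod.addOrderOf_of_isUnit (hunit b hb hb0)).ge

theorem cauchy_davenport_variant (N : ℕ) (hN : 0 < N) (A B : Finset (ZMod N))
    (hA : A.Nonempty) (hB : (0 : ZMod N) ∈ B)
    (hunit : ∀ b ∈ B, b ≠ 0 → IsUnit b) :
    min N (A.card + B.card - 1) ≤ (A + B).card :=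
  cauchy_davenport_variant_general N A B hA hB hunit
end

section
/- Let n be a positive integer and let d_1, ..., d_n ∈ Z/n satisfy d_1 + ... + d_n = 0 in Z/n. Then there exist permutations c: {1,...,n} → {1,...,n} (values c_1,...,c_n a permutation of 1,...,n) and σ ∈ S_n such that i - c_i ≡ d_{σ(i)} (mod n) for every i. -/
/-!
Hall's augmentation argument. A partial system `IsHallSystemOn d T a b` has `a`, `b` injective on
`T` with `a i - b i = d i`. While `|T| + 2 ≤ |G|`, a new index `k` can be added: pick free a-values
`x ≠ y` and try `a k = x`, `b k = x - d k`. If `x - d k = b i` collides, `i` is given the free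
a-value `y` and needs the b-value `y - d i`, and so on; with `c = x + y - d k` the successive
b-values follow the map `z ↦ c - a (b⁻¹ z)`, which is injective on `b '' T` and never returns to
`x - d k` (that would need a-value `y`), so the chain leaves `b '' T` and the last step is free.
A system on all indices but `k` is completed by the sum condition: the missing a-value `x` and
b-value `y` satisfy `x - y = d k`, since the completed `a` and `b` both enumerate `G`, so that
`∑ (a - b) = 0 = ∑ d`.
-/

open Finset Function

section Orbit

variable {α : Type*}

theorem iterate_eq_iterate_of_eqOn {f g : α → α} {s : Set α} (hfg : Set.EqOn f g s) {z : α}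
    {N : ℕ} (hs : ∀ t < N, f^[t] z ∈ s) : ∀ t ≤ N, f^[t] z = g^[t] z := by
  intro t ht
  induction t with
  | zero => rfl
  | succ t ih =>
    rw [iterate_succ_apply', iterate_succ_apply', ← ih (by omega)]
    exact hfg (hs t (by omega))

theorem Set.InjOn.iterate_injective {f : α → α} {s : Set α} (hf : Set.InjOn f s) {z : α}
    (hz : z ∉ f '' s) (hs : ∀ t, f^[t] z ∈ s) : Injective (f^[·] z) := by
  have hne : ∀ m j, f^[m] z ≠ f^[m + j + 1] z := by
    intro m
    induction m with
    | zero =>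
      intro j h
      rw [zero_add, iterate_succ_apply'] at h
      exact hz ⟨_, hs j, h.symm⟩
    | succ m ih =>
      intro j h
      rw [show m + 1 + j + 1 = m + j + 1 + 1 by omega, iterate_succ_apply',
        iterate_succ_apply'] at h
      exact ih j (hf (hs m) (hs _) h)
  intro s t h
  rcases lt_trichotomy s t with hst | rfl | hts
  · obtain ⟨j, rfl⟩ := Nat.exists_eq_add_of_lt hst
    exact (hne s j h).elim
  · rfl
  · obtain ⟨j, rfl⟩ := Nat.exists_eq_add_of_lt hts
    exact (hne t j h.symm).elim

theorem Set.InjOn.exists_iterate_notMem {f : α → α} {s : Set α} (hs : s.Finite)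
    (hf : Set.InjOn f s) {z : α} (hz : z ∉ f '' s) : ∃ N, f^[N] z ∉ s := by
  by_contra! h
  have : Finite s := hs
  obtain ⟨i, j, hij, heq⟩ :=
    Finite.exists_ne_map_eq_of_infinite fun t : ℕ => (⟨f^[t] z, h t⟩ : s)
  exact hij (hf.iterate_injective hz h (congrArg Subtype.val heq))

end Orbit

theorem Finset.image_insert_update {ι β : Type*} [DecidableEq ι] [DecidableEq β] {s : Finset ι}
    {k : ι} (hk : k ∉ s) (f : ι → β) (x : β) :
    (insert k s).image (update f k x) = insert x (s.image f) := by
  rw [image_insert, update_self,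
    image_congr fun i hi => update_of_ne (ne_of_mem_of_not_mem hi hk) _ _]

theorem Set.InjOn.insert_update {ι β : Type*} [DecidableEq ι] {s : Set ι} {f : ι → β}
    (hf : Set.InjOn f s) {k : ι} (hk : k ∉ s) {x : β} (hx : x ∉ f '' s) :
    Set.InjOn (update f k x) (insert k s) := by
  have hfs : Set.EqOn f (update f k x) s := fun i hi =>
    (update_of_ne (ne_of_mem_of_not_mem hi hk) _ _).symm
  rw [Set.injOn_insert hk, update_self, ← hfs.image_eq]
  exact ⟨hf.congr hfs, hx⟩

theorem Finset.image_insert_erase_update {ι β : Type*} [DecidableEq ι] [DecidableEq β]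
    {s : Finset ι} {k i : ι} (hk : k ∉ s) (hi : i ∈ s) (f : ι → β) :
    (insert k (s.erase i)).image (update f k (f i)) = s.image f := by
  rw [image_insert_update (fun hk' => hk (mem_of_mem_erase hk')), ← image_insert, insert_erase hi]

theorem Finset.sum_add_eq_sum_univ_of_notMem_image {ι β : Type*} [AddCommMonoid β] [Fintype β]
    [DecidableEq β] {s : Finset ι} {f : ι → β} (hf : Set.InjOn f s) {x : β} (hx : x ∉ s.image f)
    (hs : #s + 1 = Fintype.card β) : ∑ i ∈ s, f i + x = ∑ v, v := by
  have huniv : insert x (s.image f) = univ :=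
    eq_univ_of_card _ (by rw [card_insert_of_notMem hx, card_image_of_injOn hf, hs])
  rw [← huniv, sum_insert hx, sum_image hf, add_comm]

section HallSystem

variable {ι G : Type*} [AddCommGroup G]

structure IsHallSystemOn (d : ι → G) (T : Finset ι) (a b : ι → G) : Prop where
  sub_eq : ∀ i ∈ T, a i - b i = d i
  injOn_left : Set.InjOn a T
  injOn_right : Set.InjOn b T

open Classical in
/-- `z ↦ c - a (b⁻¹ z)` on `b '' T`; the value off `b '' T` is never used. -/
noncomputable def hallStep (T : Finset ι) (a b : ι → G) (c z : G) : G :=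
  if h : ∃ j ∈ T, b j = z then c - a h.choose else z

theorem hallStep_apply {T : Finset ι} {a b : ι → G} (hb : Set.InjOn b T) (c : G) {j : ι}
    (hj : j ∈ T) : hallStep T a b c (b j) = c - a j := by
  have h : ∃ i ∈ T, b i = b j := ⟨j, hj, rfl⟩
  rw [hallStep, dif_pos h, hb h.choose_spec.1 hj h.choose_spec.2]

namespace IsHallSystemOn

variable {d : ι → G} {T : Finset ι} {a b : ι → G}

theorem mono (h : IsHallSystemOn d T a b) {S : Finset ι} (hST : S ⊆ T) :
    IsHallSystemOn d S a b where
  sub_eq i hi := h.sub_eq i (hST hi)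
  injOn_left := h.injOn_left.mono (coe_subset.2 hST)
  injOn_right := h.injOn_right.mono (coe_subset.2 hST)

variable [DecidableEq ι] [DecidableEq G]

theorem insert (h : IsHallSystemOn d T a b) {k : ι} (hk : k ∉ T) {x y : G}
    (hx : x ∉ T.image a) (hy : y ∉ T.image b) (hxy : x - y = d k) :
    IsHallSystemOn d (insert k T) (update a k x) (update b k y) where
  sub_eq i hi := by
    rcases eq_or_ne i k with rfl | hik
    · simpa using hxy
    · rw [update_of_ne hik, update_of_ne hik]
      exact h.sub_eq i ((mem_insert.1 hi).resolve_left hik)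
  injOn_left := by
    rw [coe_insert]
    exact h.injOn_left.insert_update (mem_coe.not.2 hk) (by simpa using hx)
  injOn_right := by
    rw [coe_insert]
    exact h.injOn_right.insert_update (mem_coe.not.2 hk) (by simpa using hy)

theorem exchange (h : IsHallSystemOn d T a b) {k i : ι} (hk : k ∉ T) (hi : i ∈ T) {x : G}
    (hx : x ∉ T.image a) (hbi : b i = x - d k) :
    IsHallSystemOn d (Insert.insert k (T.erase i)) (update a k x) (update b k (b i)) :=
  (h.mono (erase_subset i T)).insert (fun hk' => hk (mem_of_mem_erase hk'))
    (fun hx' => hx (image_subset_image (erase_subset i T) hx'))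
    (fun hbi' => by
      obtain ⟨j, hj, hbj⟩ := mem_image.1 hbi'
      exact ne_of_mem_erase hj (h.injOn_right (mem_of_mem_erase hj) hi hbj))
    (by rw [hbi, sub_sub_cancel])

theorem hallStep_eqOn_exchange (h : IsHallSystemOn d T a b) {k i : ι} (hk : k ∉ T) (hi : i ∈ T)
    {x : G} (hx : x ∉ T.image a) (hbi : b i = x - d k) (c : G) :
    Set.EqOn (hallStep T a b c)
      (hallStep (Insert.insert k (T.erase i)) (update a k x) (update b k (b i)) c)
      ((T.erase i).image b) := by
  intro z hz
  obtain ⟨j, hj, rfl⟩ := mem_image.1 (mem_coe.1 hz)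
  have hjk : j ≠ k := ne_of_mem_of_not_mem (mem_of_mem_erase hj) hk
  rw [hallStep_apply h.injOn_right c (mem_of_mem_erase hj), ← update_of_ne hjk (b i) b,
    hallStep_apply (h.exchange hk hi hx hbi).injOn_right c (mem_insert_of_mem hj),
    update_of_ne hjk]

theorem iterate_hallStep_exchange (h : IsHallSystemOn d T a b) {k i : ι} (hk : k ∉ T)
    (hi : i ∈ T) {x y : G} (hx : x ∉ T.image a) (hy : y ∉ T.image a) (hbi : b i = x - d k)
    {N : ℕ} (hin : ∀ t < N + 1, (hallStep T a b (x + y - d k))^[t] (x - d k) ∈ T.image b) :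
    ∀ t ≤ N, (hallStep (Insert.insert k (T.erase i)) (update a k x) (update b k (b i))
        (x + y - d k))^[t] (y - d i) = (hallStep T a b (x + y - d k))^[t + 1] (x - d k) := by
  set φ := hallStep T a b (x + y - d k)
  have hφ : ∀ j ∈ T, φ (b j) = x + y - d k - a j := fun j hj =>
    hallStep_apply h.injOn_right _ hj
  have hshift : ∀ t, φ^[t] (y - d i) = φ^[t + 1] (x - d k) := fun t => by
    rw [iterate_succ_apply, ← hbi, hφ i hi]
    congr 1
    rw [← h.sub_eq i hi, hbi]; abel
  have hstay : ∀ t < N, φ^[t] (y - d i) ∈ (T.erase i).image b := by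
    intro t ht
    obtain ⟨j, hj, hbj⟩ := mem_image.1 (hin t (by omega))
    refine erase_image_subset_image_erase b T i (mem_erase.2 ⟨fun hbi' => hy ?_, ?_⟩)
    · rw [hshift, iterate_succ_apply', ← hbj, hφ j hj, hbi] at hbi'
      exact mem_image.2 ⟨j, hj, by linear_combination (norm := abel) -hbi'⟩
    · exact hshift t ▸ hin (t + 1) (by omega)
  intro t ht
  rw [← iterate_eq_iterate_of_eqOn (h.hallStep_eqOn_exchange hk hi hx hbi _) hstay t ht, hshift]

/-- Induction on the length `N` of the chain: exchanging `k` for the index `i` with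
`b i = x - d k` keeps `c = x + y - d k` and shifts the chain by one step. -/
theorem exists_insert_of_iterate_notMem (N : ℕ) :
    ∀ {T : Finset ι} {a b : ι → G} {k : ι} {x y : G}, IsHallSystemOn d T a b → k ∉ T →
      x ∉ T.image a → y ∉ T.image a → x ≠ y →
      (∀ t < N, (hallStep T a b (x + y - d k))^[t] (x - d k) ∈ T.image b) →
      (hallStep T a b (x + y - d k))^[N] (x - d k) ∉ T.image b →
      ∃ a' b', IsHallSystemOn d (Insert.insert k T) a' b' := by
  induction N with
  | zero =>
    intro T a b k x y h hk hx _ _ _ hN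
    exact ⟨_, _, h.insert hk hx hN (sub_sub_cancel x (d k))⟩
  | succ N ih =>
    intro T a b k x y h hk hx hy hxy hin hN
    obtain ⟨i, hi, hbi⟩ := mem_image.1 (hin 0 N.succ_pos)
    rw [iterate_zero_apply] at hbi
    have horbit := h.iterate_hallStep_exchange hk hi hx hy hbi hin
    have hc : y + a i - d i = x + y - d k := by
      rw [← h.sub_eq i hi, hbi]; abel
    have haT' : (Insert.insert k (T.erase i)).image (update a k x) =
        Insert.insert x ((T.erase i).image a) := image_insert_update (by simp [hk]) a x
    have hai : a i ∉ (T.erase i).image a := fun hai =>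
      have ⟨j, hj, haj⟩ := mem_image.1 hai
      ne_of_mem_erase hj (h.injOn_left (mem_of_mem_erase hj) hi haj)
    obtain ⟨a', b', h'⟩ := ih (k := i) (x := y) (y := a i) (h.exchange hk hi hx hbi)
      (by simp [ne_of_mem_of_not_mem hi hk])
      (by
        rw [haT', mem_insert, not_or]
        exact ⟨hxy.symm, fun hy' => hy (image_subset_image (erase_subset i T) hy')⟩)
      (by
        rw [haT', mem_insert, not_or]
        exact ⟨fun hax => hx (hax ▸ mem_image_of_mem a hi), hai⟩)
      (fun hya => hy (hya ▸ mem_image_of_mem a hi))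
      (fun t ht => by
        rw [image_insert_erase_update hk hi, hc, horbit t ht.le]
        exact hin (t + 1) (by omega))
      (by rw [image_insert_erase_update hk hi, hc, horbit N le_rfl]; exact hN)
    rw [insert_comm, insert_erase hi] at h'
    exact ⟨a', b', h'⟩

theorem exists_insert [Fintype G] (h : IsHallSystemOn d T a b) {k : ι} (hk : k ∉ T)
    (hT : #T + 2 ≤ Fintype.card G) : ∃ a' b', IsHallSystemOn d (Insert.insert k T) a' b' := by
  classical
  have hfree : 1 < #(T.image a)ᶜ := by
    rw [card_compl, card_image_of_injOn h.injOn_left]; omega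
  obtain ⟨x, hx, y, hy, hxy⟩ := one_lt_card.1 hfree
  rw [mem_compl] at hx hy
  set φ := hallStep T a b (x + y - d k)
  have hφ : ∀ j ∈ T, φ (b j) = x + y - d k - a j := fun j hj =>
    hallStep_apply h.injOn_right _ hj
  have hinj : Set.InjOn φ (T.image b) := by
    intro z hz w hw hzw
    obtain ⟨i, hi, rfl⟩ := mem_image.1 (mem_coe.1 hz)
    obtain ⟨j, hj, rfl⟩ := mem_image.1 (mem_coe.1 hw)
    rw [hφ i hi, hφ j hj, sub_right_inj] at hzw
    rw [h.injOn_left hi hj hzw]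
  have hstart : x - d k ∉ φ '' (T.image b) := by
    rintro ⟨z, hz, hzx⟩
    obtain ⟨j, hj, rfl⟩ := mem_image.1 (mem_coe.1 hz)
    rw [hφ j hj] at hzx
    exact hy (mem_image.2 ⟨j, hj, by linear_combination (norm := abel) -hzx⟩)
  have hexit := hinj.exists_iterate_notMem (T.image b).finite_toSet hstart
  exact exists_insert_of_iterate_notMem (Nat.find hexit) h hk hx hy hxy
    (fun t ht => not_not.1 (Nat.find_min hexit ht)) (Nat.find_spec hexit)

end IsHallSystemOn

theorem exists_isHallSystemOn [Fintype G] (d : ι → G) (T : Finset ι)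
    (hT : #T < Fintype.card G) : ∃ a b, IsHallSystemOn d T a b := by
  classical
  induction T using Finset.induction_on with
  | empty => exact ⟨0, 0, ⟨by simp, by simp, by simp⟩⟩
  | insert k T hk ih =>
    rw [card_insert_of_notMem hk] at hT
    obtain ⟨a, b, h⟩ := ih (by omega)
    exact h.exists_insert hk (by omega)

theorem exists_equiv_sub_eq_of_sum_eq_zero [Fintype ι] [Fintype G]
    (hcard : Fintype.card ι = Fintype.card G) (d : ι → G) (hd : ∑ i, d i = 0) :
    ∃ a b : ι ≃ G, ∀ i, a i - b i = d i := by
  classical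
  obtain ⟨k⟩ : Nonempty ι := Fintype.card_pos_iff.1 (hcard ▸ Fintype.card_pos)
  have hT : #(univ.erase k) + 1 = Fintype.card G := by
    rw [card_erase_add_one (mem_univ k), card_univ, hcard]
  obtain ⟨a, b, h⟩ := exists_isHallSystemOn d (univ.erase k) (by omega)
  have hmissing : ∀ f : ι → G, Set.InjOn f (univ.erase k) → ∃ x, x ∉ (univ.erase k).image f :=
    fun f hf => (exists_mem_notMem_of_card_lt_card (t := univ)
      (by rw [card_univ, card_image_of_injOn hf]; omega)).imp fun _ => And.right
  obtain ⟨x, hx⟩ := hmissing a h.injOn_left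
  obtain ⟨y, hy⟩ := hmissing b h.injOn_right
  have hxy : x - y = d k := by
    have hdT : ∑ i ∈ univ.erase k, d i + d k = 0 := by rw [sum_erase_add _ _ (mem_univ k), hd]
    rw [← sum_congr rfl h.sub_eq, sum_sub_distrib] at hdT
    linear_combination (norm := abel) sum_add_eq_sum_univ_of_notMem_image h.injOn_left hx hT -
      sum_add_eq_sum_univ_of_notMem_image h.injOn_right hy hT - hdT
  have hfull := h.insert (notMem_erase k univ) hx hy hxy
  rw [insert_erase (mem_univ k)] at hfull
  have hbij : ∀ f : ι → G, Set.InjOn f (univ : Finset ι) → Bijective f := fun f hf =>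
    (Fintype.bijective_iff_injective_and_card f).2 ⟨Set.injOn_univ.1 (by simpa using hf), hcard⟩
  exact ⟨.ofBijective _ (hbij _ hfull.injOn_left), .ofBijective _ (hbij _ hfull.injOn_right),
    fun i => hfull.sub_eq i (mem_univ i)⟩

end HallSystem

theorem ZMod.finEquiv_apply {n : ℕ} [NeZero n] (i : Fin n) :
    ZMod.finEquiv n i = (i.val : ZMod n) := by
  obtain ⟨m, rfl⟩ : ∃ m, n = m + 1 := Nat.exists_eq_succ_of_ne_zero (NeZero.ne n)
  exact (Fin.cast_val_eq_self i).symm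

theorem hall_cyclic (n : ℕ) (hn : 0 < n) (d : Fin n → ZMod n)
    (hd : ∑ i, d i = 0) :
    ∃ c σ : Equiv.Perm (Fin n), ∀ i,
      ((i.val : ZMod n) - ((c i).val : ZMod n)) = d (σ i) := by
  have : NeZero n := ⟨hn.ne'⟩
  obtain ⟨a, b, hab⟩ :=
    exists_equiv_sub_eq_of_sum_eq_zero (by rw [ZMod.card, Fintype.card_fin]) d hd
  let e : Fin n ≃ ZMod n := (ZMod.finEquiv n).toEquiv
  refine ⟨(e.trans a.symm).trans (b.trans e.symm), e.trans a.symm, fun i => ?_⟩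
  have he : ∀ j, (j.val : ZMod n) = e j := fun j => (ZMod.finEquiv_apply j).symm
  simp only [he, Equiv.trans_apply, Equiv.apply_symm_apply]
  simpa only [Equiv.apply_symm_apply] using hab (a.symm (e i))
end

section
/- Suppose p = 2n+1 is an odd prime and d_1, ..., d_n are nonzero elements of Z/p. Then there exists a partition of Z/p \ {0} into n pairs whose differences are d_1, ..., d_n (where the difference of a pair {a,b} is a - b or b - a). -/
/-!
Put the couple with difference `d_i` at `{x_i, x_i + d_i}`. This is a partition of `(ℤ/p)ˣ` as
soon as the `2n²` affine forms `x_i + δ` and `(x_i + δ) - (x_j + δ')` (`δ ∈ {0, d_i}`,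
`δ' ∈ {0, d_j}`, `i < j`) are all nonzero at `x`, since then the `2n = p - 1` seats are distinct and
nonzero. There are `(p - 1) n` forms, so by Chevalley–Warning the sum over `x ∈ (ℤ/p)ⁿ` of their
product equals that of its leading form `∏ x_i² ∏_{i<j} (x_j - x_i)⁴`, and it suffices that the
latter sum is nonzero. Here `∏_{i<j} (x_j - x_i)⁴` is a confluent Vandermonde determinant; expanding
it and summing over each variable separately leaves only the power sums `∑ t^(p-1) = -1`, and the
total is `± n! ∏_{j<n} (4j + 2)`, a unit modulo `p`.
-/

open Finset MvPolynomial Matrix Equiv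
open scoped Nat

namespace SeatingCouples

section Nullstellensatz

variable {K σ ι : Type*}

theorem totalDegree_prod_add_C_sub_prod_lt [CommRing K] {s : Finset ι} (hs : s.Nonempty)
    (L : ι → MvPolynomial σ K) (c : ι → K) (hL : ∀ i ∈ s, (L i).totalDegree ≤ 1) :
    (∏ i ∈ s, (L i + C (c i)) - ∏ i ∈ s, L i).totalDegree < #s := by
  induction hs using Finset.Nonempty.cons_induction with
  | singleton a => simp
  | cons a s ha hs ih =>
    have hLs : ∀ i ∈ s, (L i).totalDegree ≤ 1 := fun i hi => hL i (mem_cons_of_mem hi)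
    have hLa : (L a).totalDegree ≤ 1 := hL a (mem_cons_self a s)
    have hprod : (∏ i ∈ s, (L i + C (c i))).totalDegree ≤ #s := by
      refine (totalDegree_finsetProd s _).trans ?_
      simpa using sum_le_card_nsmul s _ 1 fun i hi => (totalDegree_add _ _).trans
        (max_le (hLs i hi) (by rw [totalDegree_C]; exact zero_le_one))
    have hsplit : (L a + C (c a)) * ∏ i ∈ s, (L i + C (c i)) - L a * ∏ i ∈ s, L i =
        L a * (∏ i ∈ s, (L i + C (c i)) - ∏ i ∈ s, L i) + C (c a) * ∏ i ∈ s, (L i + C (c i)) := by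
      ring
    rw [prod_cons, prod_cons, card_cons, hsplit]
    refine (totalDegree_add _ _).trans_lt (max_lt ?_ ?_)
    · exact (totalDegree_mul _ _).trans_lt (by have := ih hLs; omega)
    · exact (totalDegree_mul _ _).trans_lt (by rw [totalDegree_C]; omega)

variable [Field K] [Fintype K] [Fintype σ] [DecidableEq σ]

/-- By Chevalley–Warning, the constants `c i` only add terms of degree `< #s ≤ (|K| - 1) |σ|`,
which sum to zero over `K^σ`. -/
theorem exists_forall_eval_add_C_ne_zero {s : Finset ι} (hs : s.Nonempty)
    (L : ι → MvPolynomial σ K) (c : ι → K) (hL : ∀ i ∈ s, (L i).totalDegree ≤ 1)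
    (hcard : #s ≤ (Fintype.card K - 1) * Fintype.card σ)
    (hsum : ∑ x : σ → K, ∏ i ∈ s, eval x (L i) ≠ 0) :
    ∃ x : σ → K, ∀ i ∈ s, eval x (L i) + c i ≠ 0 := by
  have hdeg := totalDegree_prod_add_C_sub_prod_lt hs L c hL
  have hzero := sum_eval_eq_zero _ (hdeg.trans_le hcard)
  simp only [map_sub, sum_sub_distrib, sub_eq_zero, map_prod, map_add, eval_C] at hzero
  obtain ⟨x, -, hx⟩ := exists_ne_zero_of_sum_ne_zero (hzero ▸ hsum)
  exact ⟨x, prod_ne_zero_iff.mp hx⟩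

end Nullstellensatz

variable {n : ℕ}

theorem prod_Ioi_finProdFinEquiv_symm {M : Type*} [CommMonoid M]
    (F : Fin n × Fin 2 → Fin n × Fin 2 → M) :
    ∏ a : Fin (n * 2), ∏ b ∈ Ioi a, F (finProdFinEquiv.symm a) (finProdFinEquiv.symm b) =
      (∏ c, F (c, 0) (c, 1)) * ∏ i, ∏ j ∈ Ioi i, ∏ s, ∏ t, F (i, s) (j, t) := by
  have hsplit (i j : Fin n) (s t : Fin 2) :
      (if finProdFinEquiv (i, s) < finProdFinEquiv (j, t) then F (i, s) (j, t) else 1) =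
        (if j = i then if s < t then F (i, s) (j, t) else 1 else 1) *
          if j ∈ Ioi i then F (i, s) (j, t) else 1 := by
    have hlt : finProdFinEquiv (i, s) < finProdFinEquiv (j, t) ↔ j = i ∧ s < t ∨ i < j := by
      simp only [Fin.lt_def, finProdFinEquiv_apply_val, Fin.ext_iff]
      omega
    by_cases hij : i < j
    · simp [hlt, hij, hij.ne']
    · simp [hlt, hij, ite_and]
  calc ∏ a : Fin (n * 2), ∏ b ∈ Ioi a, F (finProdFinEquiv.symm a) (finProdFinEquiv.symm b)
      = ∏ ρ, ∏ ρ', if finProdFinEquiv ρ < finProdFinEquiv ρ' then F ρ ρ' else 1 := by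
        rw [← finProdFinEquiv.prod_comp]
        refine prod_congr rfl fun ρ _ => ?_
        rw [← filter_lt_eq_Ioi, prod_filter, ← finProdFinEquiv.prod_comp]
        simp
    _ = (∏ i, ∏ s, ∏ t, if s < t then F (i, s) (i, t) else 1) *
          ∏ i, ∏ s, ∏ j ∈ Ioi i, ∏ t, F (i, s) (j, t) := by
        simp only [Fintype.prod_prod_type, hsplit, prod_mul_distrib, prod_ite_irrel,
          prod_const_one, prod_ite_eq', mem_univ, if_true, prod_ite_mem, univ_inter]
    _ = _ := by
        congr 1
        · simp [Fin.prod_univ_two]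
        · exact prod_congr rfl fun i _ => prod_comm

def rowExp (ρ : Fin n × Fin 2) : ℕ := finProdFinEquiv ρ

theorem rowExp_apply (ρ : Fin n × Fin 2) : rowExp ρ = ρ.2 + 2 * ρ.1 :=
  finProdFinEquiv_apply_val ρ

theorem rowExp_lt (ρ : Fin n × Fin 2) : rowExp ρ < 2 * n := by
  rw [mul_comm]; exact (finProdFinEquiv ρ).isLt

section Vandermonde

variable {R : Type*} [CommRing R]

/-- Column `(c, 1)` holds the divided differences of `t ^ k` at the nodes `w (c, 0)`, `w (c, 1)`. -/
def dividedVandermonde (w : Fin n × Fin 2 → R) : Matrix (Fin n × Fin 2) (Fin n × Fin 2) R :=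
  of fun ρ c => if c.2 = 0 then w (c.1, 0) ^ rowExp ρ
    else ∑ i ∈ range (rowExp ρ), w (c.1, 1) ^ i * w (c.1, 0) ^ (rowExp ρ - 1 - i)

def dividedDifferenceShear (w : Fin n × Fin 2 → R) : Matrix (Fin n × Fin 2) (Fin n × Fin 2) R :=
  (blockDiagonal fun c => !![1, 1; 0, w (c, 1) - w (c, 0)]).submatrix
    (Equiv.prodComm _ _) (Equiv.prodComm _ _)

theorem vandermonde_submatrix_transpose_eq_mul (w : Fin n × Fin 2 → R) :
    ((vandermonde (w ∘ finProdFinEquiv.symm)).submatrix finProdFinEquiv finProdFinEquiv)ᵀ =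
      dividedVandermonde w * dividedDifferenceShear w := by
  ext ρ ⟨c, s⟩
  have hV : ((vandermonde (w ∘ finProdFinEquiv.symm)).submatrix finProdFinEquiv
      finProdFinEquiv)ᵀ ρ (c, s) = w (c, s) ^ rowExp ρ := by
    simp [vandermonde_apply, rowExp]
  rw [hV, mul_apply, Fintype.sum_prod_type, sum_eq_single c, Fin.sum_univ_two]
  · fin_cases s
    · simp [dividedVandermonde, dividedDifferenceShear]
    · simp only [dividedVandermonde, dividedDifferenceShear, of_apply, submatrix_apply,
        coe_prodComm, Prod.swap_prod_mk, blockDiagonal_apply_eq, Fin.mk_one, Fin.isValue, one_ne_zero, ↓reduceIte,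
        cons_val', cons_val_one, cons_val_zero, cons_val_fin_one, mul_one]
      linear_combination -geom_sum₂_mul (w (c, 1)) (w (c, 0)) (rowExp ρ)
  · intro c' _ hc'
    simp [dividedDifferenceShear, blockDiagonal_apply, hc']
  · simp

theorem det_dividedDifferenceShear (w : Fin n × Fin 2 → R) :
    det (dividedDifferenceShear w) = ∏ c, (w (c, 1) - w (c, 0)) := by
  rw [dividedDifferenceShear, det_submatrix_equiv_self, det_blockDiagonal]
  simp [det_fin_two_of]

theorem det_dividedVandermonde_X :
    det (dividedVandermonde (X : Fin n × Fin 2 → MvPolynomial (Fin n × Fin 2) ℤ)) =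
      ∏ i, ∏ j ∈ Ioi i, ∏ s, ∏ t, (X (j, t) - X (i, s)) := by
  have hshear : det (dividedDifferenceShear (X : _ → MvPolynomial (Fin n × Fin 2) ℤ)) ≠ 0 := by
    rw [det_dividedDifferenceShear, prod_ne_zero_iff]
    exact fun c _ => sub_ne_zero.2 (X_injective.ne (by simp))
  refine mul_right_cancel₀ hshear ?_
  rw [← det_mul, ← vandermonde_submatrix_transpose_eq_mul, det_transpose,
    det_submatrix_equiv_self, det_vandermonde, det_dividedDifferenceShear]
  exact (prod_Ioi_finProdFinEquiv_symm fun a b => X b - X a).trans (mul_comm _ _)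

theorem det_dividedVandermonde (w : Fin n × Fin 2 → R) :
    det (dividedVandermonde w) = ∏ i, ∏ j ∈ Ioi i, ∏ s, ∏ t, (w (j, t) - w (i, s)) := by
  have hmap : (aeval w : MvPolynomial (Fin n × Fin 2) ℤ →ₐ[ℤ] R).mapMatrix
      (dividedVandermonde X) = dividedVandermonde w := by
    ext ρ c
    by_cases hc : c.2 = 0 <;> simp [dividedVandermonde, hc]
  simpa [AlgHom.map_det, hmap] using congrArg (aeval w) det_dividedVandermonde_X

def monomialJet (t : R) : Matrix (Fin n × Fin 2) (Fin 2) R :=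
  of fun ρ s => if s = 0 then t ^ rowExp ρ else rowExp ρ * t ^ (rowExp ρ - 1)

def confluentVandermonde (x : Fin n → R) : Matrix (Fin n × Fin 2) (Fin n × Fin 2) R :=
  of fun ρ c => monomialJet (x c.1) ρ c.2

theorem confluentVandermonde_eq_dividedVandermonde (x : Fin n → R) :
    confluentVandermonde x = dividedVandermonde fun ρ => x ρ.1 := by
  ext ρ c
  by_cases hc : c.2 = 0 <;>
    simp [confluentVandermonde, monomialJet, dividedVandermonde, hc, geom_sum₂_self]

theorem det_confluentVandermonde (x : Fin n → R) :
    det (confluentVandermonde x) = ∏ i, ∏ j ∈ Ioi i, (x j - x i) ^ 4 := by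
  simp [confluentVandermonde_eq_dividedVandermonde, det_dividedVandermonde, ← pow_mul]

end Vandermonde

section BlockPerm

def blockPerm (π : Perm (Fin n)) (ε : Fin n → Fin 2) : Perm (Fin n × Fin 2) :=
  prodCongrLeft (fun _ => π) * prodCongrRight fun c => Equiv.addRight (ε c)

@[simp]
theorem blockPerm_apply (π : Perm (Fin n)) (ε : Fin n → Fin 2) (c : Fin n) (s : Fin 2) :
    blockPerm π ε (c, s) = (π c, s + ε c) := by
  simp [blockPerm]

theorem sign_blockPerm (π : Perm (Fin n)) (ε : Fin n → Fin 2) :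
    Perm.sign (blockPerm π ε) = ∏ c, Perm.sign (Equiv.addRight (ε c)) := by
  rw [blockPerm, Perm.sign_mul, Perm.sign_prodCongrLeft, Perm.sign_prodCongrRight, prod_const,
    Finset.card_univ, Fintype.card_fin, Int.units_sq, one_mul]

theorem blockPerm_injective :
    Function.Injective fun z : Perm (Fin n) × (Fin n → Fin 2) => blockPerm z.1 z.2 := by
  rintro ⟨π, ε⟩ ⟨π', ε'⟩ h
  have h0 (c : Fin n) : (π c, ε c) = (π' c, ε' c) := by
    simpa using congrArg (· (c, 0)) h
  simp only [Prod.mk.injEq] at h0 ⊢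
  exact ⟨Equiv.ext fun c => (h0 c).1, funext fun c => (h0 c).2⟩

theorem exists_blockPerm_eq (σ : Perm (Fin n × Fin 2)) (hσ : ∀ c, (σ (c, 0)).1 = (σ (c, 1)).1) :
    ∃ π ε, blockPerm π ε = σ := by
  set π₀ : Fin n → Fin n := fun c => (σ (c, 0)).1
  set ε : Fin n → Fin 2 := fun c => (σ (c, 0)).2
  have hσ_apply (c : Fin n) : ∀ s, σ (c, s) = (π₀ c, s + ε c) := by
    refine Fin.forall_fin_two.2 ⟨by simp [π₀, ε], Prod.ext (hσ c).symm ?_⟩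
    have hne : (σ (c, 1)).2 ≠ ε c := fun h =>
      absurd (σ.injective (Prod.ext (hσ c).symm h)) (by simp)
    exact (by decide : ∀ a b : Fin 2, a ≠ b → a = 1 + b) _ _ hne
  have hπ₀ : Function.Injective π₀ := fun c c' h => by
    have := σ.injective ((hσ_apply c 0).trans
      (by rw [h, zero_add, ← sub_add_cancel (ε c) (ε c'), ← hσ_apply c' (ε c - ε c')]))
    exact (Prod.ext_iff.mp this).1
  exact ⟨Equiv.ofBijective π₀ hπ₀.bijective_of_finite, ε, Equiv.ext fun ⟨c, s⟩ => by
    simp [hσ_apply]⟩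

theorem sum_sign_mul_prod_eq_of_block {R : Type*} [CommRing R]
    (h : Fin n × Fin 2 → Fin n × Fin 2 → R) (hh : ∀ a b, a.1 ≠ b.1 → h a b = 0) :
    ∑ σ : Perm (Fin n × Fin 2), (Perm.sign σ : R) * ∏ c, h (σ (c, 0)) (σ (c, 1)) =
      n ! * ∏ j, (h (j, 0) (j, 1) - h (j, 1) (j, 0)) := by
  classical
  have hblock (π : Perm (Fin n)) :
      ∑ ε, (Perm.sign (blockPerm π ε) : R) *
          ∏ c, h (blockPerm π ε (c, 0)) (blockPerm π ε (c, 1)) =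
        ∏ j, (h (j, 0) (j, 1) - h (j, 1) (j, 0)) := by
    have hsign : Perm.sign (Equiv.addRight (1 : Fin 2)) = -1 := by decide
    simp_rw [sign_blockPerm, blockPerm_apply, Units.coe_prod, Int.cast_prod, ← prod_mul_distrib]
    rw [← Fintype.prod_sum fun c s =>
        (Perm.sign (Equiv.addRight s) : R) * h (π c, 0 + s) (π c, 1 + s),
      ← Equiv.prod_comp π fun j => h (j, 0) (j, 1) - h (j, 1) (j, 0)]
    refine prod_congr rfl fun c _ => ?_
    simp [Fin.sum_univ_two, hsign, sub_eq_add_neg, add_comm]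
  rw [← Fintype.sum_of_injective _ blockPerm_injective _ _ ?_ fun _ => rfl, Fintype.sum_prod_type]
  · simp_rw [hblock, sum_const, card_univ, Fintype.card_perm, Fintype.card_fin, nsmul_eq_mul]
  · intro σ hσ
    contrapose! hσ
    obtain ⟨π, ε, rfl⟩ := exists_blockPerm_eq σ fun c => by
      by_contra hc
      exact hσ (mul_eq_zero_of_right _ (prod_eq_zero (mem_univ c) (hh _ _ hc)))
    exact ⟨(π, ε), rfl⟩

end BlockPerm

section Evaluation

theorem sum_prod_mul_det_eq {R T : Type*} [CommRing R] [Fintype T] (f : T → R)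
    (J : T → Matrix (Fin n × Fin 2) (Fin 2) R) :
    ∑ x : Fin n → T, (∏ c, f (x c)) * det (of fun ρ c => J (x c.1) ρ c.2) =
      ∑ σ : Perm (Fin n × Fin 2),
        (Perm.sign σ : R) * ∏ c, ∑ t, f t * (J t (σ (c, 0)) 0 * J t (σ (c, 1)) 1) := by
  classical
  simp_rw [det_apply', mul_sum]
  rw [sum_comm]
  refine sum_congr rfl fun σ _ => ?_
  rw [Fintype.prod_sum, mul_sum]
  refine sum_congr rfl fun x _ => ?_
  simp only [Fintype.prod_prod_type, Fin.prod_univ_two, of_apply, prod_mul_distrib]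
  ring

theorem sum_pow_eq_ite {K : Type*} [Field K] [Fintype K] {m : ℕ} (hm : m ≠ 0) :
    ∑ t : K, t ^ m = if Fintype.card K - 1 ∣ m then -1 else 0 := by
  classical
  rw [← FiniteField.sum_pow_units]
  refine (Fintype.sum_of_injective _ Units.val_injective _ _ (fun t ht => ?_) fun _ => rfl).symm
  obtain rfl : t = 0 := by
    by_contra h0
    exact ht ⟨Units.mk0 t h0, rfl⟩
  exact zero_pow hm

theorem sum_sq_mul_monomialJet {K : Type*} [Field K] [Fintype K]
    (hq : Fintype.card K = 2 * n + 1) (ρ ρ' : Fin n × Fin 2) :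
    ∑ t : K, t ^ 2 * (monomialJet t ρ 0 * monomialJet t ρ' 1) =
      if rowExp ρ + rowExp ρ' + 1 = 2 * n then -(rowExp ρ' : K) else 0 := by
  have hterm (t : K) : t ^ 2 * (monomialJet t ρ 0 * monomialJet t ρ' 1) =
      rowExp ρ' * t ^ (rowExp ρ + rowExp ρ' + 1) := by
    simp only [monomialJet, of_apply, ite_true, if_neg one_ne_zero]
    rcases Nat.eq_zero_or_pos (rowExp ρ') with h | h
    · simp [h]
    · rw [show rowExp ρ + rowExp ρ' + 1 = 2 + rowExp ρ + (rowExp ρ' - 1) by omega]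
      ring
  have hdvd : 2 * n ∣ rowExp ρ + rowExp ρ' + 1 ↔ rowExp ρ + rowExp ρ' + 1 = 2 * n :=
    ⟨fun h => Nat.eq_of_dvd_of_lt_two_mul (by omega) h
      (by have := rowExp_lt ρ; have := rowExp_lt ρ'; omega), fun h => h ▸ dvd_rfl⟩
  simp_rw [hterm, ← mul_sum, sum_pow_eq_ite (Nat.succ_ne_zero _), hq, Nat.add_sub_cancel, hdvd]
  split_ifs <;> simp

def complementaryPairing (n : ℕ) : Perm (Fin n × Fin 2) :=
  prodCongrLeft fun s => if s = 0 then 1 else Fin.revPerm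

theorem rowExp_complementaryPairing (j : Fin n) (s : Fin 2) :
    rowExp (complementaryPairing n (j, s)) = if s = 0 then 2 * (j : ℕ) else 2 * n - 1 - 2 * j := by
  have := j.isLt
  fin_cases s
  · simp [complementaryPairing, rowExp_apply]
  · simp only [complementaryPairing, prodCongrLeft_apply, Fin.mk_one, Fin.isValue, one_ne_zero,
      ↓reduceIte, Fin.revPerm_apply, rowExp_apply, Fin.val_rev]
    omega

/-- The power sum `∑ t ^ m` vanishes unless `2n ∣ m`, so only rows whose exponents add up to
`2n - 1` can share a block; `complementaryPairing` relabels the rows so that these pairs become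
the blocks `{(j, 0), (j, 1)}`. -/
theorem sum_prod_sq_mul_det_confluentVandermonde {K : Type*} [Field K] [Fintype K]
    (hq : Fintype.card K = 2 * n + 1) :
    ∑ x : Fin n → K, (∏ c, x c ^ 2) * det (confluentVandermonde x) =
      Perm.sign (complementaryPairing n) * (n ! * ∏ j : Fin n, (4 * (j : ℕ) + 2 : K)) := by
  classical
  set G : Fin n × Fin 2 → Fin n × Fin 2 → K := fun ρ ρ' =>
    if rowExp ρ + rowExp ρ' + 1 = 2 * n then -(rowExp ρ' : K) else 0
  set τ := complementaryPairing n
  calc ∑ x : Fin n → K, (∏ c, x c ^ 2) * det (confluentVandermonde x)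
      = ∑ σ : Perm (Fin n × Fin 2), (Perm.sign σ : K) * ∏ c, G (σ (c, 0)) (σ (c, 1)) := by
        refine (sum_prod_mul_det_eq (fun t => t ^ 2) monomialJet).trans ?_
        simp only [sum_sq_mul_monomialJet hq, G]
    _ = Perm.sign τ * ∑ σ : Perm (Fin n × Fin 2),
          (Perm.sign σ : K) * ∏ c, G (τ (σ (c, 0))) (τ (σ (c, 1))) := by
        rw [mul_sum]
        exact (Fintype.sum_equiv (Equiv.mulLeft τ) _ _ fun σ => by
          simp [Perm.sign_mul, mul_assoc]).symm
    _ = Perm.sign τ * (n ! * ∏ j, (G (τ (j, 0)) (τ (j, 1)) - G (τ (j, 1)) (τ (j, 0)))) := by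
        rw [sum_sign_mul_prod_eq_of_block fun a b => G (τ a) (τ b)]
        rintro ⟨i, s⟩ ⟨j, t⟩ hij
        have hij' : (i : ℕ) ≠ j := Fin.val_ne_of_ne hij
        have := i.isLt
        have := j.isLt
        refine if_neg ?_
        simp only [τ, rowExp_complementaryPairing]
        split_ifs <;> omega
    _ = _ := by
        have hchar : (2 * n + 1 : K) = 0 := by
          exact_mod_cast hq ▸ FiniteField.cast_card_eq_zero K
        congr 2
        refine prod_congr rfl fun j _ => ?_
        have := j.isLt
        simp only [G, τ, rowExp_complementaryPairing, if_true, if_neg one_ne_zero]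
        rw [if_pos (by omega), if_pos (by omega), Nat.cast_sub (by omega), Nat.cast_sub (by omega)]
        push_cast
        linear_combination -hchar

end Evaluation

section Seating

theorem range_eq_compl_singleton_of_injective {α β : Type*} [Fintype α] [Fintype β] {f : α → β}
    (hf : Function.Injective f) {b : β} (hb : ∀ a, f a ≠ b)
    (hcard : Fintype.card β = Fintype.card α + 1) : Set.range f = {b}ᶜ := by
  refine Set.eq_of_subset_of_ncard_le (by rintro _ ⟨a, rfl⟩; exact hb a) ?_
  rw [Set.ncard_range_of_injective hf, Set.ncard_compl, Set.ncard_singleton,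
    Nat.card_eq_fintype_card, Nat.card_eq_fintype_card, hcard, Nat.add_sub_cancel]

theorem two_mul_sum_card_Ioi (n : ℕ) : 2 * ∑ i : Fin n, #(Ioi i) = n * (n - 1) := by
  simp only [Fin.card_Ioi]
  rw [Fin.sum_univ_eq_sum_range (fun i => n - 1 - i), sum_range_reflect (fun i => i) n, mul_comm,
    sum_range_id_mul_two]

/-- The factors are `x_i + seatShift (i, s)` for every seat `(i, s)`, and the difference of the
factors of `(i, s)` and `(j, t)` whenever `i < j`. -/
abbrev FactorIndex (n : ℕ) := (Fin n × Fin 2) ⊕ ((Σ _ : Fin n, Fin n) × (Fin 2 × Fin 2))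

def factorSet (n : ℕ) : Finset (FactorIndex n) :=
  univ.disjSum ((univ.sigma fun i => Ioi i) ×ˢ univ)

theorem card_factorSet : #(factorSet n) = 2 * n * n := by
  have h := two_mul_sum_card_Ioi n
  have : n * (n - 1) = n * n - n := Nat.mul_sub_one n n
  simp only [factorSet, card_disjSum, card_product, card_sigma, card_univ, Fintype.card_prod,
    Fintype.card_fin]
  have := Nat.le_mul_self n
  rw [mul_assoc]
  omega

noncomputable def linearPart {K : Type*} [CommRing K] : FactorIndex n → MvPolynomial (Fin n) K :=
  Sum.elim (fun ρ => X ρ.1) fun q => X q.1.1 - X q.1.2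

theorem totalDegree_linearPart_le {K : Type*} [CommRing K] [Nontrivial K] (γ : FactorIndex n) :
    (linearPart γ : MvPolynomial (Fin n) K).totalDegree ≤ 1 := by
  rcases γ with ρ | q
  · exact (totalDegree_X _).le
  · exact (totalDegree_sub _ _).trans (max_le (totalDegree_X _).le (totalDegree_X _).le)

theorem prod_eval_linearPart {K : Type*} [CommRing K] (x : Fin n → K) :
    ∏ γ ∈ factorSet n, eval x (linearPart γ) = (∏ c, x c ^ 2) * det (confluentVandermonde x) := by
  rw [det_confluentVandermonde, factorSet, prod_disjSum, prod_product, prod_sigma]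
  congr 1
  · simp [linearPart, Fintype.prod_prod_type, sq]
  · refine prod_congr rfl fun i _ => prod_congr rfl fun j _ => ?_
    simp only [linearPart, Sum.elim_inr, map_sub, eval_X, prod_const, card_univ,
      Fintype.card_prod, Fintype.card_fin]
    ring

theorem natCast_factorial_mul_prod_ne_zero {p : ℕ} [Fact p.Prime] (hpn : p = 2 * n + 1) :
    (n ! : ZMod p) * ∏ j : Fin n, (4 * ((j : ℕ) : ZMod p) + 2) ≠ 0 := by
  have hp : p.Prime := Fact.out
  have hndvd : ¬p ∣ n ! * ∏ j : Fin n, (4 * (j : ℕ) + 2) := by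
    rw [hp.dvd_mul, hp.prime.dvd_finsetProd_iff, hp.dvd_factorial]
    rintro (h | ⟨j, -, h⟩)
    · omega
    · rw [show 4 * (j : ℕ) + 2 = 2 * (2 * j + 1) by ring, hp.dvd_mul] at h
      have := j.isLt
      rcases h with h | h <;> have := Nat.le_of_dvd (by omega) h <;> omega
  exact_mod_cast (ZMod.natCast_eq_zero_iff _ p).not.mpr hndvd

def seatShift {K : Type*} [Zero K] (d : Fin n → K) (ρ : Fin n × Fin 2) : K :=
  if ρ.2 = 0 then 0 else d ρ.1

theorem exists_seating {p : ℕ} [Fact p.Prime] (hpn : p = 2 * n + 1) (d : Fin n → ZMod p)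
    (hd : ∀ i, d i ≠ 0) :
    ∃ u : Fin n × Fin 2 → ZMod p, Function.Injective u ∧ (∀ ρ, u ρ ≠ 0) ∧
      ∀ i, u (i, 1) = u (i, 0) + d i := by
  have hn : 0 < n := by have := (Fact.out : p.Prime).two_le; omega
  have hq : Fintype.card (ZMod p) = 2 * n + 1 := by rw [ZMod.card, hpn]
  obtain ⟨x, hx⟩ := exists_forall_eval_add_C_ne_zero (s := factorSet n)
    ⟨Sum.inl (⟨0, hn⟩, 0), by simp [factorSet]⟩ linearPart
    (Sum.elim (seatShift d) fun q => seatShift d (q.1.1, q.2.1) - seatShift d (q.1.2, q.2.2))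
    (fun γ _ => totalDegree_linearPart_le γ)
    (by rw [card_factorSet, hq, Fintype.card_fin, Nat.add_sub_cancel])
    (by
      simp_rw [prod_eval_linearPart, sum_prod_sq_mul_det_confluentVandermonde hq]
      refine mul_ne_zero ?_ (natCast_factorial_mul_prod_ne_zero hpn)
      rcases Int.units_eq_one_or (Perm.sign (complementaryPairing n)) with h | h <;> simp [h])
  set u : Fin n × Fin 2 → ZMod p := fun ρ => x ρ.1 + seatShift d ρ
  have hu_ne_zero (ρ : Fin n × Fin 2) : u ρ ≠ 0 := by
    simpa [linearPart] using hx (Sum.inl ρ) (by simp [factorSet])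
  have hu_ne {i j : Fin n} (hij : i < j) (s t : Fin 2) : u (i, s) ≠ u (j, t) := by
    have := hx (Sum.inr (⟨i, j⟩, (s, t))) (by simp [factorSet, hij])
    simp only [linearPart, Sum.elim_inr, map_sub, eval_X] at this
    exact fun h => this (by linear_combination h)
  refine ⟨u, ?_, hu_ne_zero, fun i => by simp [u, seatShift]⟩
  rintro ⟨i, s⟩ ⟨j, t⟩ h
  rcases lt_trichotomy i j with hij | rfl | hij
  · exact absurd h (hu_ne hij s t)
  · fin_cases s <;> fin_cases t <;> simp_all [u, seatShift]
  · exact absurd h.symm (hu_ne hij t s)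

end Seating

end SeatingCouples

open SeatingCouples in
theorem seating_couples_prime (n : ℕ) (p : ℕ) (hp : p.Prime) (hpn : p = 2 * n + 1)
    (d : Fin n → ZMod p) (hd : ∀ i, d i ≠ 0) :
    ∃ (a b : Fin n → ZMod p) (σ : Equiv.Perm (Fin n)),
      Function.Injective (Sum.elim a b) ∧
      Set.range (Sum.elim a b) = {0}ᶜ ∧
      ∀ i, a i - b i = d (σ i) ∨ b i - a i = d (σ i) := by
  have := Fact.mk hp
  obtain ⟨u, hu, hu_ne_zero, hu_sub⟩ := exists_seating hpn d hd
  have hinj : Function.Injective (Sum.elim (fun i => u (i, 0)) fun i => u (i, 1)) := by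
    rintro (i | i) (j | j) h <;> simpa using hu h
  refine ⟨_, _, 1, hinj, range_eq_compl_singleton_of_injective hinj ?_ ?_, fun i => Or.inr ?_⟩
  · rintro (i | i) <;> exact hu_ne_zero _
  · rw [ZMod.card, Fintype.card_sum, Fintype.card_fin, hpn, two_mul]
  · simp [hu_sub]
end

section
/- Let N = 2n and suppose there exists a partition of Z/N into n pairs with differences d_1, ..., d_n where each d_i is a unit of Z/N. Then there exist signs s_1, ..., s_n ∈ {1,-1} with s_1 d_1 + ... + s_n d_n ≡ n (mod 2n). -/
/-!
Every difference `d` is odd, so each pair `{a, b}` of the partition consists of one even and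
one odd residue, and `±d` is the sum of the contributions of `a` and `b` to the alternating sum
`1 - 2 + 3 - ⋯ - 2n`. Summing over the pairs gives that whole alternating sum, which is
`n` modulo `2n`.
-/

open Finset

theorem ZMod.sum_univ_eq_sum_range {M : Type*} [AddCommMonoid M] (N : ℕ) [NeZero N]
    (f : ZMod N → M) : ∑ x, f x = ∑ k ∈ range N, f k :=
  sum_nbij' ZMod.val Nat.cast (fun x _ => mem_range.2 x.val_lt) (fun _ _ => mem_univ _)
    (fun x _ => ZMod.natCast_zmod_val x) (fun _ hk => ZMod.val_cast_of_lt (mem_range.1 hk))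
    (fun x _ => by rw [ZMod.natCast_zmod_val])

theorem sum_range_neg_one_pow_succ_mul {R : Type*} [CommRing R] (m : ℕ) :
    ∑ k ∈ range (2 * m), (-1 : R) ^ (k + 1) * k = m := by
  induction m with
  | zero => simp
  | succ m ih =>
    rw [show 2 * (m + 1) = 2 * m + 1 + 1 by ring, sum_range_succ, sum_range_succ, ih,
      pow_succ, pow_succ, pow_succ, pow_mul]
    push_cast
    ring

section Parity

variable {n : ℕ}

def parity (n : ℕ) : ZMod (2 * n) →+* ZMod 2 := ZMod.castHom (dvd_mul_right 2 n) (ZMod 2)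

theorem parity_eq_one_of_isUnit {x : ZMod (2 * n)} (hx : IsUnit x) : parity n x = 1 :=
  isUnit_iff_eq_one.1 (hx.map (parity n))

theorem parity_natCast_eq_zero_iff (k : ℕ) : parity n k = 0 ↔ Even k := by
  rw [map_natCast, ZMod.natCast_eq_zero_iff_even]

/-- The sign pattern of `1 - 2 + 3 - ⋯ - 2n`. -/
def alternatingTerm (x : ZMod (2 * n)) : ZMod (2 * n) :=
  if parity n x = 0 then -x else x

theorem alternatingTerm_natCast (k : ℕ) :
    alternatingTerm (k : ZMod (2 * n)) = (-1) ^ (k + 1) * k := by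
  rw [alternatingTerm, pow_succ]
  rcases Nat.even_or_odd k with hk | hk
  · rw [if_pos ((parity_natCast_eq_zero_iff k).2 hk), hk.neg_one_pow]
    ring
  · rw [if_neg ((parity_natCast_eq_zero_iff k).not.2 (Nat.not_even_iff_odd.2 hk)),
      hk.neg_one_pow]
    ring

theorem sum_alternatingTerm [NeZero n] : ∑ x : ZMod (2 * n), alternatingTerm x = n := by
  simp only [ZMod.sum_univ_eq_sum_range, alternatingTerm_natCast]
  exact sum_range_neg_one_pow_succ_mul n

theorem exists_sign_smul_sub_eq_alternatingTerm_add {a b : ZMod (2 * n)} (hab : IsUnit (a - b)) :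
    ∃ s : ℤ, (s = 1 ∨ s = -1) ∧ s • (a - b) = alternatingTerm a + alternatingTerm b := by
  have hpar : parity n a - parity n b = 1 := by
    rw [← map_sub, parity_eq_one_of_isUnit hab]
  have exactly_one_even : ∀ x y : ZMod 2, x - y = 1 → x = 0 ∧ y ≠ 0 ∨ x ≠ 0 ∧ y = 0 := by decide
  rcases exactly_one_even _ _ hpar with ⟨ha, hb⟩ | ⟨ha, hb⟩
  · refine ⟨-1, Or.inr rfl, ?_⟩
    rw [alternatingTerm, alternatingTerm, if_pos ha, if_neg hb, neg_one_smul]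
    ring
  · refine ⟨1, Or.inl rfl, ?_⟩
    rw [alternatingTerm, alternatingTerm, if_neg ha, if_pos hb, one_smul]
    ring

theorem exists_sign_smul_eq_alternatingTerm_add {a b d : ZMod (2 * n)} (hd : IsUnit d)
    (h : a - b = d ∨ b - a = d) :
    ∃ s : ℤ, (s = 1 ∨ s = -1) ∧ s • d = alternatingTerm a + alternatingTerm b := by
  rcases h with rfl | rfl
  · exact exists_sign_smul_sub_eq_alternatingTerm_add hd
  · rw [add_comm]
    exact exists_sign_smul_sub_eq_alternatingTerm_add hd

end Parity

theorem signed_sum_of_partition (n : ℕ) (hn : 0 < n) (d : Fin n → ZMod (2 * n))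
    (hd : ∀ i, IsUnit (d i))
    (a b : Fin n → ZMod (2 * n)) (σ : Equiv.Perm (Fin n))
    (hbij : Function.Bijective (Sum.elim a b))
    (hdiff : ∀ i, a i - b i = d (σ i) ∨ b i - a i = d (σ i)) :
    ∃ s : Fin n → ℤ, (∀ i, s i = 1 ∨ s i = -1) ∧
      ∑ i, (s i) • d i = (n : ZMod (2 * n)) := by
  have : NeZero n := ⟨hn.ne'⟩
  choose t ht_sign ht_pair using
    fun i => exists_sign_smul_eq_alternatingTerm_add (hd (σ i)) (hdiff i)
  refine ⟨fun i => t (σ.symm i), fun i => ht_sign _, ?_⟩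
  calc ∑ i, t (σ.symm i) • d i = ∑ j, t j • d (σ j) := by
        simpa using (Equiv.sum_comp σ fun i => t (σ.symm i) • d i).symm
    _ = ∑ j, alternatingTerm (a j) + ∑ j, alternatingTerm (b j) := by
        rw [← sum_add_distrib]
        exact sum_congr rfl fun j _ => ht_pair j
    _ = ∑ x, alternatingTerm x := by
        rw [← Fintype.sum_bijective _ hbij (alternatingTerm ∘ Sum.elim a b) _ fun _ => rfl,
          Fintype.sum_sum_type]
        rfl
    _ = n := sum_alternatingTerm
end
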